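/- arXiv:1308.6318 — 3 statements merged into one kernel-verified Lean document; each statement's English description precedes it below -/
import Mathlib

section
/- A subgroup H of a Polish group G, with the subspace topology, is Polish if and only if H is a Gδ subset of G, if and only if H is closed in G. -/
open Set Filter Topology

/-- Preimage of a `Gδ` set under a continuous map is `Gδ`. -/
lemma isGδ_preimage' {X Y : Type*} [TopologicalSpace X] [TopologicalSpace Y] {f : X → Y}
    (hf : Continuous f) {s : Set Y} (hs : IsGδ s) : IsGδ (f ⁻¹' s) := by
  obtain ⟨T, hT, hTc, rfl⟩ := hs
  rw [sInter_eq_biInter, preimage_iInter₂]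
  exact IsGδ.biInter hTc fun t ht => ((hT t ht).preimage hf).isGδ

/-- A Polish subspace of a Polish space is a `Gδ` set (Mazurkiewicz). -/
lemma isGδ_of_polishSpace_subtype {X : Type*} [TopologicalSpace X] [PolishSpace X] {s : Set X}
    (hs : PolishSpace s) : IsGδ s := by
  haveI hT2 : T2Space X := by letI := TopologicalSpace.upgradeIsCompletelyMetrizable X; infer_instance
  haveI hFC : FirstCountableTopology X := by letI := TopologicalSpace.upgradeIsCompletelyMetrizable X; infer_instance
  obtain ⟨m, hm, hcomp⟩ := hs.complete
  letI := m
  haveI : CompleteSpace ↥s := hcomp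
  -- U n : points having an open neighborhood whose trace on s has small m-diameter
  set U : ℕ → Set X := fun n =>
    ⋃ V ∈ {V : Set X | IsOpen V ∧
      ∀ a b : ↥s, (a : X) ∈ V → (b : X) ∈ V → dist a b ≤ 1 / (n + 1)}, V with hU
  have hUopen : ∀ n, IsOpen (U n) := fun n => isOpen_biUnion fun V hV => hV.1
  have hsub : ∀ n, s ⊆ U n := by
    intro n x hx
    set x' : ↥s := ⟨x, hx⟩
    have hball : IsOpen[instTopologicalSpaceSubtype] (Metric.ball x' (1 / (2 * (n + 1)))) := by
      rw [← hm]; exact Metric.isOpen_ball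
    rw [isOpen_induced_iff] at hball
    obtain ⟨V, hVopen, hVeq⟩ := hball
    refine mem_iUnion₂.mpr ⟨V, ⟨hVopen, fun a b ha hb => ?_⟩, ?_⟩
    · have ha' : a ∈ Metric.ball x' (1 / (2 * (n + 1))) := by rw [← hVeq]; exact ha
      have hb' : b ∈ Metric.ball x' (1 / (2 * (n + 1))) := by rw [← hVeq]; exact hb
      have h1 : dist a x' < 1 / (2 * (n + 1)) := ha'
      have h2 : dist x' b < 1 / (2 * (n + 1)) := by rw [dist_comm]; exact hb'
      have hn : (0:ℝ) < n + 1 := by positivity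
      have heq : 1 / (2 * ((n:ℝ) + 1)) + 1 / (2 * ((n:ℝ) + 1)) = 1 / ((n:ℝ) + 1) := by
        rw [← add_div]
        rw [show (1:ℝ) + 1 = 2 by norm_num]
        rw [div_mul_eq_div_div]
        norm_num
      calc dist a b ≤ dist a x' + dist x' b := dist_triangle a x' b
        _ ≤ 1 / (2 * (n + 1)) + 1 / (2 * (n + 1)) := by linarith
        _ = 1 / (n + 1) := heq
    · have : x' ∈ Metric.ball x' (1 / (2 * (n + 1))) :=
        Metric.mem_ball_self (by positivity)
      rw [← hVeq] at this
      exact this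
  have hkey : closure s ∩ ⋂ n, U n ⊆ s := by
    rintro x ⟨hxc, hxU⟩
    simp only [mem_iInter] at hxU
    have hVs : ∀ n : ℕ, ∃ V : Set X, (IsOpen V ∧
        ∀ a b : ↥s, (a : X) ∈ V → (b : X) ∈ V → dist a b ≤ 1 / (n + 1)) ∧ x ∈ V := by
      intro n
      rcases mem_iUnion₂.mp (hxU n) with ⟨V, hV, hxV⟩
      exact ⟨V, hV, hxV⟩
    choose V hVprop hxV using hVs
    obtain ⟨b, hb⟩ := (𝓝 x).exists_antitone_basis
    have hWopen : ∀ n : ℕ, IsOpen ((⋂ k ∈ Finset.range (n + 1), V k) ∩ interior (b n)) :=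
      fun n => (isOpen_biInter_finset fun k _ => (hVprop k).1).inter isOpen_interior
    have hxW : ∀ n : ℕ, x ∈ (⋂ k ∈ Finset.range (n + 1), V k) ∩ interior (b n) :=
      fun n => ⟨mem_biInter fun k _ => hxV k,
        mem_interior_iff_mem_nhds.mpr (hb.1.mem_of_mem trivial)⟩
    have hWne : ∀ n : ℕ, (((⋂ k ∈ Finset.range (n + 1), V k) ∩ interior (b n)) ∩ s).Nonempty := by
      intro n
      rcases mem_closure_iff.mp hxc _ (hWopen n) (hxW n) with ⟨y, hy⟩
      exact ⟨y, hy⟩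
    choose y hyW hys using hWne
    set y' : ℕ → ↥s := fun n => ⟨y n, hys n⟩ with hy'
    have hmem : ∀ {k n : ℕ}, n ≤ k → (y k : X) ∈ V n := by
      intro k n hnk
      have := (hyW k).1
      rw [mem_iInter₂] at this
      exact this n (Finset.mem_range.mpr (Nat.lt_succ_of_le hnk))
    have hcauchy : CauchySeq y' := by
      rw [Metric.cauchySeq_iff']
      intro ε hε
      obtain ⟨N, hN⟩ := exists_nat_one_div_lt hε
      refine ⟨N, fun n hn => lt_of_le_of_lt ?_ hN⟩
      exact (hVprop N).2 (y' n) (y' N) (hmem hn) (hmem le_rfl)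
    obtain ⟨z, hz⟩ := cauchySeq_tendsto_of_complete hcauchy
    rw [hm] at hz
    have hz' : Tendsto (fun n => (y n : X)) atTop (𝓝 (z : X)) :=
      (continuous_subtype_val.tendsto z).comp hz
    have hx' : Tendsto (fun n => (y n : X)) atTop (𝓝 x) :=
      hb.tendsto fun n => interior_subset (hyW n).2
    rw [← tendsto_nhds_unique hz' hx']
    exact z.2
  have hclosureGδ : IsGδ (closure s) := by
    letI := TopologicalSpace.upgradeIsCompletelyMetrizable X
    exact isClosed_closure.isGδ
  have hsEq : s = closure s ∩ ⋂ n, U n :=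
    Subset.antisymm (subset_inter subset_closure (subset_iInter hsub)) hkey
  rw [hsEq]
  exact hclosureGδ.inter (IsGδ.iInter fun n => (hUopen n).isGδ)

/-- Every element of a Polish group belongs to a dense `Gδ` subgroup. -/
lemma mem_of_dense_isGδ_subgroup {G : Type*} [TopologicalSpace G] [Group G] [IsTopologicalGroup G]
    [PolishSpace G] (H : Subgroup G) (hgδ : IsGδ (H : Set G)) (hd : Dense (H : Set G)) (x : G) :
    x ∈ H := by
  haveI : BaireSpace G := by letI := TopologicalSpace.upgradeIsCompletelyMetrizable G; infer_instance
  have hres : (H : Set G) ∈ residual G := residual_of_dense_Gδ hgδ hd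
  have hres2 : (fun y => x * y) ⁻¹' (H : Set G) ∈ residual G := by
    rw [← (Homeomorph.mulLeft x⁻¹).residual_map_eq, Filter.mem_map]
    have : (Homeomorph.mulLeft x⁻¹) ⁻¹' ((fun y => x * y) ⁻¹' (H : Set G)) = (H : Set G) := by
      ext g
      simp [Homeomorph.mulLeft]
    rw [this]
    exact hres
  obtain ⟨y, hy1, hy2⟩ := (dense_of_mem_residual (inter_mem hres hres2)).nonempty
  have : x = (x * y) * y⁻¹ := by group
  rw [this]
  exact H.mul_mem hy2 (H.inv_mem hy1)

/-- A subgroup `H` of a Polish group `G`, with the subspace topology, is Polish iff it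
is a `Gδ` subset of `G`, iff it is closed in `G`. -/
theorem subgroup_polish_iff_gdelta_iff_closed (G : Type*) [TopologicalSpace G]
    [Group G] [IsTopologicalGroup G] [PolishSpace G] (H : Subgroup G) :
    (PolishSpace H ↔ IsGδ (H : Set G)) ∧ (IsGδ (H : Set G) ↔ IsClosed (H : Set G)) := by
  set K := H.topologicalClosure with hK
  have hKclosed : IsClosed (K : Set G) := H.isClosed_topologicalClosure
  haveI hKpolish : PolishSpace ↥(K : Set G) := hKclosed.polishSpace
  haveI : PolishSpace ↥K := hKpolish
  have hHK : H ≤ K := H.le_topologicalClosure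
  set H' := H.subgroupOf K with hH'
  have hcoe : (H' : Set ↥K) = (Subtype.val : ↥K → G) ⁻¹' (H : Set G) :=
    Subgroup.coe_subgroupOf H K
  have himg : (Subtype.val : Set.Elem (K : Set G) → G) '' (H' : Set ↥K) = (H : Set G) := by
    ext g
    constructor
    · rintro ⟨a, ha, rfl⟩
      rw [hcoe] at ha
      exact ha
    · intro hg
      exact ⟨⟨g, hHK hg⟩, by rw [hcoe]; exact hg, rfl⟩
  have hd' : Dense (H' : Set ↥K) := by
    rw [Subtype.dense_iff, himg]
    exact fun g hg => hg
  -- from H' being everything in K, conclude that H is closed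
  have closed_of_all : (∀ z : ↥K, z ∈ H') → IsClosed (H : Set G) := by
    intro hall
    apply isClosed_of_closure_subset
    intro g hg
    have hgK : g ∈ K := hg
    have := hall ⟨g, hgK⟩
    rwa [Subgroup.mem_subgroupOf] at this
  have gdelta_to_closed : IsGδ (H : Set G) → IsClosed (H : Set G) := by
    intro hgδ
    refine closed_of_all fun z => ?_
    have hgδ' : IsGδ (H' : Set ↥K) := by
      rw [hcoe]
      exact isGδ_preimage' continuous_subtype_val hgδ
    exact mem_of_dense_isGδ_subgroup H' hgδ' hd' z
  have polish_to_closed : PolishSpace ↥H → IsClosed (H : Set G) := by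
    intro hp
    refine closed_of_all fun z => ?_
    have e : ↥(H' : Set ↥K) ≃ₜ ↥H :=
      { toFun := fun a => ⟨(a.1 : G), Subgroup.mem_subgroupOf.mp (SetLike.mem_coe.mp a.2)⟩
        invFun := fun h => ⟨⟨(h : G), hHK h.2⟩,
          SetLike.mem_coe.mpr (Subgroup.mem_subgroupOf.mpr h.2)⟩
        left_inv := fun a => rfl
        right_inv := fun h => rfl
        continuous_toFun := by
          apply Continuous.subtype_mk
          exact continuous_subtype_val.comp continuous_subtype_val
        continuous_invFun := by
          apply Continuous.subtype_mk
          apply Continuous.subtype_mk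
          exact continuous_subtype_val }
    haveI : PolishSpace ↥(H' : Set ↥K) := e.isClosedEmbedding.polishSpace
    have hgδ' : IsGδ (H' : Set ↥K) := isGδ_of_polishSpace_subtype ‹_›
    exact mem_of_dense_isGδ_subgroup H' hgδ' hd' z
  have closed_to_gdelta : IsClosed (H : Set G) → IsGδ (H : Set G) := by
    intro h
    letI := TopologicalSpace.upgradeIsCompletelyMetrizable G
    exact h.isGδ
  have closed_to_polish : IsClosed (H : Set G) → PolishSpace ↥H := fun h => h.polishSpace
  exact ⟨⟨fun hp => closed_to_gdelta (polish_to_closed hp),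
          fun hgδ => closed_to_polish (gdelta_to_closed hgδ)⟩,
         ⟨gdelta_to_closed, closed_to_gdelta⟩⟩
end

section
/- Let G be a Polish group acting in a Borel way on a standard Borel space X. Then for every x ∈ X, the stabilizer G_x = {g ∈ G : g·x = x} is a closed subgroup of G. -/
open MeasureTheory Topology Filter Set

/-- The frontier of an open set is meager. -/
lemma isMeagre_frontier_of_isOpen {G : Type*} [TopologicalSpace G] {U : Set G}
    (hU : IsOpen U) : IsMeagre (frontier U) := by
  have hint : interior (frontier U) = ∅ := by
    rw [← frontier_compl]
    exact interior_frontier hU.isClosed_compl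
  exact residual_of_dense_open isClosed_frontier.isOpen_compl
    (interior_eq_empty_iff_dense_compl.mp hint)

/-- Right translations preserve the residual filter. -/
lemma tendsto_residual_mul_right {G : Type*} [TopologicalSpace G] [Group G]
    [IsTopologicalGroup G] (h : G) :
    Tendsto (fun g : G => g * h) (residual G) (residual G) :=
  tendsto_residual_of_isOpenMap (continuous_mul_right h) (Homeomorph.mulRight h).isOpenMap

/-- Key category-theoretic lemma: for a Baire measurable set `B` in a Baire topological group,
the set of `h` such that `B · h = B` modulo a meager set is closed. -/
lemma isClosed_baire_right_stabilizer {G : Type*} [TopologicalSpace G] [Group G]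
    [IsTopologicalGroup G] [BaireSpace G] {B : Set G} (hB : BaireMeasurableSet B) :
    IsClosed {h : G | ∀ᵇ g : G, (g * h ∈ B ↔ g ∈ B)} := by
  obtain ⟨U, hUo, hBU'⟩ := hB.residualEq_isOpen
  have hBU : ∀ᵇ g : G, (g ∈ B ↔ g ∈ U) := by
    rw [← Filter.eventuallyEq_set]; exact hBU'
  set S := {h : G | ∀ᵇ g : G, (g * h ∈ B ↔ g ∈ B)} with hSdef
  -- members of S also "stabilize" U modulo meager
  have hSU : ∀ h ∈ S, ∀ᵇ g : G, (g * h ∈ U ↔ g ∈ U) := by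
    intro h hh
    filter_upwards [hh, hBU, (tendsto_residual_mul_right h).eventually hBU] with g h1 h2 h3
    rw [← h3, h1, h2]
  rw [← isOpen_compl_iff, isOpen_iff_mem_nhds]
  -- we show instead `closure S ⊆ S`
  suffices hcl : closure S ⊆ S by
    intro h hh
    rcases (em (h ∈ closure S)) with hmem | hmem
    · exact absurd (hcl hmem) hh
    · have : IsOpen (closure S)ᶜ := isClosed_closure.isOpen_compl
      exact Filter.mem_of_superset (this.mem_nhds hmem) fun g hg hgS => hg (subset_closure hgS)
  intro h hh
  -- Claim A : the preimage of U under right mult by h is inside closure U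
  have claimA : ∀ g : G, g * h ∈ U → g ∈ closure U := by
    intro g hg
    rw [mem_closure_iff]
    intro V hVo hgV
    -- find h' ∈ S close to h with g * h' ∈ U
    obtain ⟨h', hh'W, hh'S⟩ :
        ((fun h'' : G => g * h'') ⁻¹' U ∩ S).Nonempty := by
      rw [mem_closure_iff] at hh
      exact hh _ (hUo.preimage (continuous_mul_left g)) hg
    have hdense : Dense {g' : G | g' * h' ∈ U ↔ g' ∈ U} :=
      dense_of_mem_residual (hSU h' hh'S)
    obtain ⟨g', ⟨hg'V, hg'pre⟩, hg'D⟩ :=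
      hdense.inter_open_nonempty (V ∩ (fun g'' : G => g'' * h') ⁻¹' U)
        (hVo.inter (hUo.preimage (continuous_mul_right h'))) ⟨g, hgV, hh'W⟩
    exact ⟨g', hg'V, hg'D.mp hg'pre⟩
  -- Claim B : if g ∈ U then g * h ∈ closure U
  have claimB : ∀ g ∈ U, g * h ∈ closure U := by
    intro g hg
    have hmaps : MapsTo (fun h'' : G => g * h'') S (closure U) := by
      intro h' hh'S
      rw [mem_closure_iff]
      intro V hVo hgV
      have hdense : Dense {g' : G | g' * h' ∈ U ↔ g' ∈ U} :=
        dense_of_mem_residual (hSU h' hh'S)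
      obtain ⟨g', ⟨hg'V, hg'U⟩, hg'D⟩ :=
        hdense.inter_open_nonempty ((fun g'' : G => g'' * h') ⁻¹' V ∩ U)
          ((hVo.preimage (continuous_mul_right h')).inter hUo) ⟨g, hgV, hg⟩
      exact ⟨g' * h', hg'V, hg'D.mpr hg'U⟩
    have := (hmaps.closure (continuous_mul_left g)).mono_right
      (by rw [closure_closure] : closure (closure U) ⊆ closure U)
    exact this hh
  -- Put together : the preimage V of U differs from U by subsets of frontiers
  set V : Set G := (fun g : G => g * h) ⁻¹' U with hVdef
  have hVo : IsOpen V := hUo.preimage (continuous_mul_right h)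
  have hVclU : V ⊆ closure U := claimA
  have hUclV : U ⊆ closure V := by
    intro g hg
    have h1 : g * h ∈ closure U := claimB g hg
    have h2 : g ∈ (Homeomorph.mulRight h⁻¹) '' (closure U) :=
      ⟨g * h, h1, by simp [Homeomorph.mulRight]⟩
    rw [(Homeomorph.mulRight h⁻¹).image_closure] at h2
    have himg : (Homeomorph.mulRight h⁻¹) '' U = V := by
      ext g'
      simp only [Homeomorph.mulRight, Set.mem_image, Homeomorph.homeomorph_mk_coe,
        Equiv.coe_fn_mk, hVdef, Set.mem_preimage]
      constructor
      · rintro ⟨y, hy, rfl⟩; simpa using hy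
      · intro hy; exact ⟨g' * h, hy, by simp⟩
    rwa [himg] at h2
  -- the set where V and U differ is contained in a meager set
  have hmeagerU : IsMeagre (frontier U) := isMeagre_frontier_of_isOpen hUo
  have hmeagerV : IsMeagre (frontier V) := isMeagre_frontier_of_isOpen hVo
  have hres : {g : G | g ∈ V ↔ g ∈ U} ∈ residual G := by
    have hmem : (frontier U)ᶜ ∩ (frontier V)ᶜ ∈ residual G :=
      Filter.inter_mem hmeagerU hmeagerV
    refine Filter.mem_of_superset hmem ?_
    rintro g ⟨hgU, hgV⟩
    constructor
    · intro hgVmem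
      have : g ∈ closure U := hVclU hgVmem
      by_contra hgUmem
      exact hgU ⟨this, by rwa [hUo.interior_eq]⟩
    · intro hgUmem
      have : g ∈ closure V := hUclV hgUmem
      by_contra hgVmem
      exact hgV ⟨this, by rwa [hVo.interior_eq]⟩
  -- conclude h ∈ S
  show ∀ᵇ g : G, (g * h ∈ B ↔ g ∈ B)
  filter_upwards [hres, hBU, (tendsto_residual_mul_right h).eventually hBU] with g h1 h2 h3
  rw [h3, h2]
  exact h1

/-- If a Polish group `G` acts in a Borel way on a standard Borel space `X`, then the
stabilizer of any point `x` is a closed subgroup of `G`. -/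
theorem stabilizer_closed_subgroup
    (G : Type*) [TopologicalSpace G] [Group G] [IsTopologicalGroup G] [PolishSpace G]
    [MeasurableSpace G] [BorelSpace G]
    (X : Type*) [MeasurableSpace X] [StandardBorelSpace X]
    (a : G → X → X)
    (h_one : ∀ x : X, a 1 x = x)
    (h_mul : ∀ (g h : G) (x : X), a g (a h x) = a (g * h) x)
    (h_meas : Measurable fun p : G × X => a p.1 p.2)
    (x : X) :
    ∃ H : Subgroup G, (H : Set G) = {g : G | a g x = x} ∧ IsClosed (H : Set G) := by
  have haire : BaireSpace G := by
    letI := TopologicalSpace.upgradeIsCompletelyMetrizable G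
    infer_instance
  -- the stabilizer subgroup
  have inv_mem : ∀ g : G, a g x = x → a g⁻¹ x = x := by
    intro g hg
    calc a g⁻¹ x = a g⁻¹ (a g x) := by rw [hg]
    _ = a (g⁻¹ * g) x := h_mul _ _ _
    _ = x := by rw [inv_mul_cancel]; exact h_one x
  refine ⟨{ carrier := {g : G | a g x = x}
            one_mem' := h_one x
            mul_mem' := by
              intro g h hg hh
              show a (g * h) x = x
              rw [← h_mul, hh, hg]
            inv_mem' := by
              intro g hg
              exact inv_mem g hg }, rfl, ?_⟩
  show IsClosed {g : G | a g x = x}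
  -- embed X into ℝ
  obtain ⟨e, he⟩ := exists_measurableEmbedding_real (α := X)
  set F : G → ℝ := fun g => e (a g x) with hFdef
  have hF : Measurable F := by
    have h1 : Measurable fun g : G => a g x :=
      h_meas.comp (measurable_id.prodMk measurable_const)
    exact he.measurable.comp h1
  -- the Borel sets F⁻¹(Iio q)
  set B : ℚ → Set G := fun q => F ⁻¹' (Set.Iio (q : ℝ)) with hBdef
  have hBmeas : ∀ q : ℚ, BaireMeasurableSet (B q) :=
    fun q => (hF measurableSet_Iio).baireMeasurableSet
  -- each closed set S q contains the stabilizer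
  set S : ℚ → Set G := fun q => {h : G | ∀ᵇ g : G, (g * h ∈ B q ↔ g ∈ B q)} with hSdef
  have hSclosed : ∀ q : ℚ, IsClosed (S q) := fun q => isClosed_baire_right_stabilizer (hBmeas q)
  have hsub : ∀ q : ℚ, {g : G | a g x = x} ⊆ S q := by
    intro q s hs
    show ∀ᵇ g : G, (g * s ∈ B q ↔ g ∈ B q)
    refine Filter.Eventually.of_forall fun g => ?_
    have : F (g * s) = F g := by
      simp only [hFdef]
      congr 1
      rw [← h_mul, hs]
    simp only [hBdef, Set.mem_preimage, this]
  -- take h in the closure of the stabilizer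
  rw [← closure_subset_iff_isClosed]
  intro h hh
  have hhS : ∀ q : ℚ, h ∈ S q := fun q =>
    ((hSclosed q).closure_subset_iff.mpr (hsub q)) hh
  -- intersect the residual sets
  have hres : {g : G | ∀ q : ℚ, (g * h ∈ B q ↔ g ∈ B q)} ∈ residual G := by
    rw [show {g : G | ∀ q : ℚ, (g * h ∈ B q ↔ g ∈ B q)} =
        ⋂ q : ℚ, {g : G | g * h ∈ B q ↔ g ∈ B q} by ext g; simp]
    exact countable_iInter_mem.mpr fun q => hhS q
  have : Nonempty G := ⟨1⟩
  obtain ⟨g, hg⟩ := (dense_of_mem_residual hres).nonempty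
  -- from the choice of g we get F (g * h) = F g
  have hFgh : F (g * h) = F g := by
    by_contra hne
    rcases lt_or_gt_of_ne hne with hlt | hlt
    · obtain ⟨q, hq1, hq2⟩ := exists_rat_btwn hlt
      have := (hg q).mp (by simpa [hBdef] using hq1)
      simp only [hBdef, Set.mem_preimage, Set.mem_Iio] at this
      exact absurd this (not_lt.mpr hq2.le)
    · obtain ⟨q, hq1, hq2⟩ := exists_rat_btwn hlt
      have := (hg q).mpr (by simpa [hBdef] using hq1)
      simp only [hBdef, Set.mem_preimage, Set.mem_Iio] at this
      exact absurd this (not_lt.mpr hq2.le)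
  -- conclude a h x = x
  have hax : a (g * h) x = a g x := he.injective hFgh
  show a h x = x
  calc a h x = a (g⁻¹ * (g * h)) x := by group
  _ = a g⁻¹ (a (g * h) x) := (h_mul _ _ _).symm
  _ = a g⁻¹ (a g x) := by rw [hax]
  _ = a (g⁻¹ * g) x := h_mul _ _ _
  _ = x := by rw [inv_mul_cancel]; exact h_one x
end

section
/- The set of codes of compact Polish metric spaces is Borel: identifying a Polish metric space with a double sequence r ∈ ℝ^{ω×ω} recording the distances on a countable dense subset, the set 𝕏_c = {r ∈ 𝕏 : the completion of (ω, d_r) is compact} is a Borel subset of 𝕏, where 𝕏 ⊆ ℝ^{ω×ω} is the closed set of sequences satisfying the pseudometric axioms (r_{ij} ≥ 0 with equality iff i = j, symmetry, triangle inequality). -/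
/-- A code for a Polish metric space: a double sequence of reals satisfying the metric
axioms (interpreted as the distances on a countable dense subset indexed by `ω`). -/
def IsMetricCode (r : ℕ → ℕ → ℝ) : Prop :=
  (∀ i j, 0 ≤ r i j) ∧ (∀ i j, r i j = 0 ↔ i = j) ∧
  (∀ i j, r i j = r j i) ∧ (∀ i j k, r i j ≤ r i k + r k j)

/-- `𝕏`, the space of codes of Polish metric spaces, as a subspace of `ℝ^{ω×ω}`. -/
def MetricCodes : Type := {r : ℕ → ℕ → ℝ // IsMetricCode r}

noncomputable instance : TopologicalSpace MetricCodes :=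
  instTopologicalSpaceSubtype

noncomputable instance : MeasurableSpace MetricCodes := borel MetricCodes

instance : BorelSpace MetricCodes := ⟨rfl⟩

/-- The countable set, viewed as a metric space via the code `x`. -/
def CodeSpace (_x : MetricCodes) : Type := ℕ

/-- The canonical identification `ℕ ≃ CodeSpace x`. -/
def CodeSpace.mk (x : MetricCodes) (n : ℕ) : CodeSpace x := n

noncomputable instance (x : MetricCodes) : MetricSpace (CodeSpace x) where
  dist i j := x.1 i j
  dist_self i := (x.2.2.1 i i).mpr rfl
  dist_comm i j := x.2.2.2.1 i j
  dist_triangle i j k := x.2.2.2.2 i k j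
  eq_of_dist_eq_zero h := (x.2.2.1 _ _).mp h

lemma codeSpace_dist (x : MetricCodes) (i j : CodeSpace x) : dist i j = x.1 i j := rfl

/-- The key equivalence: the completion is compact iff the code is "totally bounded"
in a countably-expressible way. -/
lemma compact_iff_tb (x : MetricCodes) :
    (∃ (Y : Type) (_ : MetricSpace Y), CompactSpace Y ∧
        ∃ f : ℕ → Y, DenseRange f ∧ ∀ i j, dist (f i) (f j) = x.1 i j) ↔
    ∀ q : ℚ, 0 < q → ∃ k : ℕ, ∀ j : ℕ, ∃ n ≤ k, x.1 j n ≤ (q : ℝ) := by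
  constructor
  · rintro ⟨Y, _, hc, f, hf, hd⟩ q hq
    have hq2 : (0 : ℝ) < q / 2 := by positivity
    obtain ⟨t, htf, hcov⟩ := Metric.totallyBounded_iff.mp
      (isCompact_univ (X := Y)).totallyBounded (q / 2) hq2
    -- for each point of Y pick a close point of the range of f
    have hpick : ∀ y : Y, ∃ n, dist y (f n) < q / 2 := fun y =>
      hf.exists_dist_lt y hq2
    choose g hg using hpick
    refine ⟨(htf.toFinset.image g).sup id, fun j => ?_⟩
    have : f j ∈ ⋃ y ∈ t, Metric.ball y (q / 2) := hcov (Set.mem_univ _)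
    obtain ⟨y, hy, hby⟩ := Set.mem_iUnion₂.mp this
    refine ⟨g y, ?_, ?_⟩
    · exact Finset.le_sup (f := id)
        (Finset.mem_image.mpr ⟨y, htf.mem_toFinset.mpr hy, rfl⟩)
    · rw [← hd]
      have h1 : dist (f j) y < q / 2 := Metric.mem_ball.mp hby
      have h2 : dist y (f (g y)) < q / 2 := hg y
      have := dist_triangle (f j) y (f (g y))
      linarith
  · intro h
    have htb : TotallyBounded (Set.univ : Set (CodeSpace x)) := by
      rw [Metric.totallyBounded_iff]
      intro ε hε
      obtain ⟨q, hq0, hqε⟩ := exists_rat_btwn hε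
      have hq0' : 0 < q := by exact_mod_cast hq0
      obtain ⟨k, hk⟩ := h q hq0'
      refine ⟨CodeSpace.mk x '' Set.Iic k, (Set.finite_Iic k).image _, fun j _ => ?_⟩
      obtain ⟨n, hnk, hn⟩ := hk j
      refine Set.mem_iUnion₂.mpr ⟨CodeSpace.mk x n, ?_, ?_⟩
      · exact ⟨n, hnk, rfl⟩
      · exact Metric.mem_ball.mpr (lt_of_le_of_lt (by rw [codeSpace_dist]; exact hn) hqε)
    refine ⟨UniformSpace.Completion (CodeSpace x), inferInstance, ?_,
      fun n => ((CodeSpace.mk x n : CodeSpace x) : UniformSpace.Completion (CodeSpace x)),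
      ?_, ?_⟩
    · constructor
      rw [isCompact_iff_totallyBounded_isComplete]
      constructor
      · have h1 : TotallyBounded
            ((↑) '' (Set.univ : Set (CodeSpace x)) :
              Set (UniformSpace.Completion (CodeSpace x))) :=
          htb.image (UniformSpace.Completion.uniformContinuous_coe _)
        have h2 : Dense ((↑) '' (Set.univ : Set (CodeSpace x)) :
            Set (UniformSpace.Completion (CodeSpace x))) := by
          rw [Set.image_univ]
          exact UniformSpace.Completion.denseRange_coe
        have := h1.closure
        rwa [h2.closure_eq] at this
      · exact completeSpace_iff_isComplete_univ.mp inferInstance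
    · exact UniformSpace.Completion.denseRange_coe.comp
        ((show Function.Surjective (CodeSpace.mk x) from fun n => ⟨n, rfl⟩).denseRange)
        (UniformSpace.Completion.continuous_coe _)
    · intro i j
      rw [UniformSpace.Completion.dist_eq]
      rfl

/-- The set `𝕏_c ⊆ 𝕏` of codes whose completion is compact — equivalently, codes that
embed densely and isometrically into some compact metric space — is Borel in `𝕏`. -/
theorem compact_codes_borel :
    MeasurableSet {x : MetricCodes |
      ∃ (Y : Type) (_ : MetricSpace Y), CompactSpace Y ∧
        ∃ f : ℕ → Y, DenseRange f ∧ ∀ i j, dist (f i) (f j) = x.1 i j} := by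
  have hset : {x : MetricCodes |
      ∃ (Y : Type) (_ : MetricSpace Y), CompactSpace Y ∧
        ∃ f : ℕ → Y, DenseRange f ∧ ∀ i j, dist (f i) (f j) = x.1 i j} =
      ⋂ q : {q : ℚ // 0 < q}, ⋃ k : ℕ, ⋂ j : ℕ, ⋃ n : ℕ, ⋃ _ : n ≤ k,
        {x : MetricCodes | x.1 j n ≤ (q.1 : ℝ)} := by
    ext x
    simp only [Set.mem_setOf_eq, Set.mem_iInter, Set.mem_iUnion, compact_iff_tb x,
      Subtype.forall, exists_prop]
  rw [hset]
  refine MeasurableSet.iInter fun q => MeasurableSet.iUnion fun k =>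
    MeasurableSet.iInter fun j => MeasurableSet.iUnion fun n =>
    MeasurableSet.iUnion fun _ => ?_
  have hc : Continuous fun x : MetricCodes => x.1 j n :=
    (continuous_apply n).comp ((continuous_apply j).comp continuous_subtype_val)
  exact (isClosed_le hc continuous_const).measurableSet
end
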